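/- If the auction system is β-KL-expressive and there is only one slot to display ads (w_1 > 0 and w_k = 0 for all k ≥ 2), then in the full-information setting, for every conservative pure Nash equilibrium b of the PBM-GSP mechanism, SW(𝔳) ≤ (1/β) · SW(b), where 𝔳 is the truthful keyword-bid profile. -/

import Mathlib

open Finset MeasureTheory

noncomputable section

namespace PBM

attribute [local instance] Classical.propDecidable

/-- 0-indexed rank of advertiser `i` among the advertisers with a positive bid
(higher bid first, ties broken by smaller index). -/
def rank {n : ℕ} (bs : Fin n → ℝ) (i : Fin n) : ℕ :=
  (Finset.univ.filter fun j => 0 < bs j ∧ (bs i < bs j ∨ (bs j = bs i ∧ j < i))).card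

/-- 0-indexed rank of `i` among all coordinates of `x` (decreasing, ties by index). -/
def rankAll {n : ℕ} (x : Fin n → ℝ) (i : Fin n) : ℕ :=
  (Finset.univ.filter fun j => x i < x j ∨ (x j = x i ∧ j < i)).card

/-- click probability of the slot obtained by `i` (0 if `i` places no positive bid). -/
def slotW {n : ℕ} (w : ℕ → ℝ) (bs : Fin n → ℝ) (i : Fin n) : ℝ :=
  if 0 < bs i then w (rank bs i) else 0

/-- GSP per-click payment of `i`: the bid of the advertiser ranked right below `i`
(0 if there is none). -/
def pay {n : ℕ} (bs : Fin n → ℝ) (i : Fin n) : ℝ :=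
  ∑ j ∈ Finset.univ.filter (fun j => 0 < bs j ∧ rank bs j = rank bs i + 1), bs j

/-- utility of bidder `i` in the single-keyword GSP game with values `vv`. -/
def gspUtil {n : ℕ} (w : ℕ → ℝ) (vv : Fin n → ℝ) (bs : Fin n → ℝ) (i : Fin n) : ℝ :=
  slotW w bs i * (vv i - pay bs i)

variable {Q S : Type*} [Fintype Q] [Fintype S]

/-- expected value of keyword `s` for an advertiser with per-query valuations `vq`. -/
def kwVal (P : Q → ℝ) (pi : Q → S → ℝ) (vq : Q → ℝ) (s : S) : ℝ :=
  (∑ q, pi q s * vq q * P q) / (∑ q, pi q s * P q)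

/-- probability mass of keyword `s`. -/
def mass (P : Q → ℝ) (pi : Q → S → ℝ) (s : S) : ℝ := ∑ q, pi q s * P q

/-- expected utility of advertiser `i` in PBM-GSP. -/
def util {n : ℕ} (P : Q → ℝ) (pi : Q → S → ℝ) (w : ℕ → ℝ)
    (v : Fin n → Q → ℝ) (b : Fin n → S → ℝ) (i : Fin n) : ℝ :=
  ∑ q, P q * ∑ s, pi q s *
    (slotW w (fun j => b j s) i * (v i q - pay (fun j => b j s) i))

/-- social welfare of bid profile `b` in PBM-GSP. -/
def SW {n : ℕ} (P : Q → ℝ) (pi : Q → S → ℝ) (w : ℕ → ℝ)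
    (v : Fin n → Q → ℝ) (b : Fin n → S → ℝ) : ℝ :=
  ∑ q, P q * ∑ s, pi q s * ∑ i, slotW w (fun j => b j s) i * v i q

/-- optimal social welfare. -/
def SWopt {n : ℕ} (P : Q → ℝ) (w : ℕ → ℝ) (v : Fin n → Q → ℝ) : ℝ :=
  ∑ q, P q * ∑ i, w (rankAll (fun j => v j q) i) * v i q

/-- welfare of the truthful keyword-bid profile `𝔳` (each advertiser bids his
expected keyword value on every keyword, no `κ` constraint). -/
def SWtruth {n : ℕ} (P : Q → ℝ) (pi : Q → S → ℝ) (w : ℕ → ℝ)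
    (v : Fin n → Q → ℝ) : ℝ :=
  ∑ q, P q * ∑ s, pi q s *
    ∑ i, w (rankAll (fun j => kwVal P pi (v j) s) i) * kwVal P pi (v i) s

/-- a bid vector is valid if it is nonnegative and positive on at most `κ` keywords. -/
def ValidBid (κ : ℕ) (bi : S → ℝ) : Prop :=
  (∀ s, 0 ≤ bi s) ∧ ((Finset.univ.filter fun s => 0 < bi s).card ≤ κ)

/-- a bid profile is conservative if everybody bids at most his expected keyword value. -/
def Conservative {n : ℕ} (P : Q → ℝ) (pi : Q → S → ℝ)
    (v : Fin n → Q → ℝ) (b : Fin n → S → ℝ) : Prop :=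
  ∀ i s, b i s ≤ kwVal P pi (v i) s

/-- `β`-keyword-level expressiveness for valuation profile `v`. -/
def KLExpressive {n : ℕ} (pi : Q → S → ℝ) (v : Fin n → Q → ℝ) (κ : ℕ) (β : ℝ) : Prop :=
  ∀ i : Fin n,
    β * ((Finset.univ.filter fun s : S => ∃ q, 0 < pi q s ∧ 0 < v i q).card : ℝ) ≤ (κ : ℝ)

/-- expected utility of advertiser `i` in PBM-GSP with reserve price vector `r`. -/
def utilR {n : ℕ} (P : Q → ℝ) (pi : Q → S → ℝ) (w : ℕ → ℝ) (r : S → ℝ)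
    (v : Fin n → Q → ℝ) (b : Fin n → S → ℝ) (i : Fin n) : ℝ :=
  ∑ q, P q * ∑ s, pi q s *
    (if 0 < b i s ∧ r s ≤ b i s then
       w (rank (fun j => b j s) i) * (v i q - max (r s) (pay (fun j => b j s) i))
     else 0)

/-- revenue of PBM-GSP with reserve price vector `r`. -/
def revenue {n : ℕ} (P : Q → ℝ) (pi : Q → S → ℝ) (w : ℕ → ℝ) (r : S → ℝ)
    (b : Fin n → S → ℝ) : ℝ :=
  ∑ q, P q * ∑ s, pi q s * ∑ i,
    (if 0 < b i s ∧ r s ≤ b i s then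
       w (rank (fun j => b j s) i) * max (r s) (pay (fun j => b j s) i)
     else 0)

/-- reserve-restricted social welfare of PBM-GSP with reserve price vector `r`. -/
def SWres {n : ℕ} (P : Q → ℝ) (pi : Q → S → ℝ) (w : ℕ → ℝ) (r : S → ℝ)
    (v : Fin n → Q → ℝ) (b : Fin n → S → ℝ) : ℝ :=
  ∑ q, P q * ∑ s, pi q s * ∑ i,
    (if 0 < b i s ∧ r s ≤ b i s then w (rank (fun j => b j s) i) * v i q else 0)

/-- marginal CDF on keyword `s` of a distribution `T` of keyword-valuation vectors. -/
def cdfT (T : Measure (S → ℝ)) (s : S) (x : ℝ) : ℝ :=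
  ((T.map fun f => f s) (Set.Iic x)).toReal

/-- the virtual value function `φ_s(x) = x - (1 - T_s(x))/t_s(x)`. -/
def virt (T : Measure (S → ℝ)) (td : S → ℝ → ℝ) (s : S) (x : ℝ) : ℝ :=
  x - (1 - cdfT T s x) / td s x

/-- `td s` is the density of the marginal of `T` on keyword `s`. -/
def HasDensity (T : Measure (S → ℝ)) (td : S → ℝ → ℝ) : Prop :=
  ∀ s : S, T.map (fun f => f s)
    = MeasureTheory.volume.withDensity (fun x => ENNReal.ofReal (td s x))

/-- `r` is the vector of Myerson reserve prices. -/
def MyersonReserve (T : Measure (S → ℝ)) (td : S → ℝ → ℝ) (r : S → ℝ) : Prop :=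
  ∀ s : S, 0 ≤ r s ∧ virt T td s (r s) = 0

/-- `T` is an MHR distribution with bounded derivative `η`. -/
def MHRBounded (T : Measure (S → ℝ)) (td : S → ℝ → ℝ) (r : S → ℝ) (η : ℝ) : Prop :=
  ∀ s : S, (∀ x : ℝ, 0 ≤ x → DifferentiableAt ℝ (virt T td s) x) ∧
    (∀ x : ℝ, 0 ≤ x → 1 ≤ deriv (virt T td s) x) ∧
    (∀ x : ℝ, r s ≤ x → deriv (virt T td s) x ≤ η)

/-- `T` has a monotone hazard rate. -/
def MHRhazard (T : Measure (S → ℝ)) (td : S → ℝ → ℝ) : Prop :=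
  ∀ s : S, MonotoneOn (fun x => td s x / (1 - cdfT T s x))
    {x : ℝ | 0 ≤ x ∧ cdfT T s x < 1}

/-- expected revenue (per valuation profile) of PBM-VCG with reserve prices, via
Myerson's lemma: virtual-value surplus of the welfare-maximizing allocation. -/
def revVCG {n : ℕ} (P : Q → ℝ) (pi : Q → S → ℝ) (w : ℕ → ℝ)
    (T : Measure (S → ℝ)) (td : S → ℝ → ℝ) (v : Fin n → Q → ℝ) : ℝ :=
  ∑ s, mass P pi s * ∑ i, w (rankAll (fun j => kwVal P pi (v j) s) i) *
    (if 0 < virt T td s (kwVal P pi (v i) s) then virt T td s (kwVal P pi (v i) s) else 0)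

end PBM

/-!
On a single-slot keyword `s`, advertiser `i` can always secure `w₀ · m_s · (V_i^s - p_i^s)⁺`,
where `m_s` is the mass of `s`, `V_i^s` his expected value and `p_i^s` the highest bid of the
others, by bidding `V_i^s` there; if he already wins `s`, this is exactly what he earns.
Expressiveness lets him do this on a set of keywords carrying a `β` fraction of these gains, so
at a Nash equilibrium `β · ∑_s gain_i(s) ≤ u_i`. On each keyword the efficient welfare exceeds
the equilibrium welfare only when the efficient advertiser loses it, and then by at most his gain
there, because conservative bids stay below the winner's value. With `U = ∑ u_i ≤ SW(b)` and
`T` the total gain of efficient advertisers on the keywords they lose, this gives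
`β (U + T) ≤ U` and `SW(𝔳) ≤ SW(b) + T`, hence `β · SW(𝔳) ≤ β · SW(b) + (1 - β) U ≤ SW(b)`.
-/

namespace PBM

open Function

lemma exists_subset_card_eq_mul_sum_le {α : Type*} (g : α → ℝ) (F : Finset α)
    {k : ℕ} (hk : k ≤ #F) : ∃ D ⊆ F, #D = k ∧ k * ∑ s ∈ F, g s ≤ #F * ∑ s ∈ D, g s := by
  classical
  induction F using induction_on_min_value g generalizing k with
  | empty => exact ⟨∅, subset_refl _, by simp at hk; simp [hk], by simp⟩
  | insert a F ha hmin ih =>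
    rw [card_insert_of_notMem ha] at hk ⊢
    rcases hk.eq_or_lt with rfl | hk
    · exact ⟨insert a F, subset_refl _, card_insert_of_notMem ha, by push_cast; rfl⟩
    obtain ⟨D, hDF, hD, hsum⟩ := ih (Nat.le_of_lt_succ hk)
    refine ⟨D, hDF.trans (subset_insert a F), hD, ?_⟩
    have hgD : k * g a ≤ ∑ s ∈ D, g s := by
      simpa [hD] using card_nsmul_le_sum D g (g a) fun s hs => hmin s (hDF hs)
    rw [sum_insert ha]
    push_cast
    linarith

lemma mul_sum_le_of_forall_card_le {α : Type*} {g : α → ℝ} {F : Finset α}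
    (hg : ∀ s ∈ F, 0 ≤ g s) {k : ℕ} {β u : ℝ} (hβ1 : β ≤ 1) (hβk : β * #F ≤ k)
    (h : ∀ D ⊆ F, #D ≤ k → ∑ s ∈ D, g s ≤ u) : β * ∑ s ∈ F, g s ≤ u := by
  have hF := sum_nonneg hg
  rcases le_or_gt #F k with hFk | hkF
  · nlinarith [h F subset_rfl hFk]
  · obtain ⟨D, hDF, hD, hsum⟩ := exists_subset_card_eq_mul_sum_le g F hkF.le
    have hFpos : (0 : ℝ) < #F := by exact_mod_cast (Nat.zero_le k).trans_lt hkF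
    refine le_of_mul_le_mul_left ?_ hFpos
    nlinarith [h D hDF hD.le]

section SingleKeyword

variable {n : ℕ} {x bs : Fin n → ℝ} {i j : Fin n}

/-- Ties are broken in favour of the smaller index, hence the order dual on `Fin n`. -/
def bidKey (x : Fin n → ℝ) (i : Fin n) : ℝ ×ₗ (Fin n)ᵒᵈ := toLex (x i, OrderDual.toDual i)

lemma bidKey_injective (x : Fin n → ℝ) : Injective (bidKey x) := fun i j h => by
  simpa [bidKey] using congrArg (fun k => OrderDual.ofDual (ofLex k).2) h

lemma bidKey_lt_bidKey : bidKey x i < bidKey x j ↔ x i < x j ∨ x j = x i ∧ j < i := by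
  simp [bidKey, Prod.Lex.toLex_lt_toLex, eq_comm]

lemma bid_le_of_bidKey_le (h : bidKey x i ≤ bidKey x j) : x i ≤ x j :=
  Prod.Lex.monotone_fst _ _ h

lemma rank_eq_card (bs : Fin n → ℝ) (i : Fin n) :
    rank bs i = #{j | 0 < bs j ∧ bidKey bs i < bidKey bs j} := by
  simp only [rank, bidKey_lt_bidKey]

lemma rankAll_eq_card (x : Fin n → ℝ) (i : Fin n) :
    rankAll x i = #{j | bidKey x i < bidKey x j} := by
  simp only [rankAll, bidKey_lt_bidKey]

lemma rank_lt_rank (hj : 0 < bs j) (h : bidKey bs i < bidKey bs j) : rank bs j < rank bs i := by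
  rw [rank_eq_card, rank_eq_card]
  refine card_lt_card ((ssubset_iff_of_subset fun k => ?_).2 ⟨j, by simp [hj, h], by simp⟩)
  simp only [mem_filter, mem_univ, true_and]
  exact fun ⟨hk, hjk⟩ => ⟨hk, h.trans hjk⟩

lemma rank_injOn (bs : Fin n → ℝ) : Set.InjOn (rank bs) {j | 0 < bs j} := by
  intro i hi j hj hij
  by_contra hne
  rcases lt_or_gt_of_ne ((bidKey_injective bs).ne hne) with h | h
  · exact (rank_lt_rank hj h).ne' hij
  · exact (rank_lt_rank hi h).ne hij

def IsWinner (bs : Fin n → ℝ) (i : Fin n) : Prop := 0 < bs i ∧ rank bs i = 0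

instance (bs : Fin n → ℝ) : DecidablePred (IsWinner bs) :=
  fun i => inferInstanceAs (Decidable (0 < bs i ∧ rank bs i = 0))

lemma isWinner_iff : IsWinner bs i ↔ 0 < bs i ∧ ∀ j, 0 < bs j → bidKey bs j ≤ bidKey bs i := by
  simp [IsWinner, rank_eq_card, filter_eq_empty_iff]

lemma IsWinner.bid_le (h : IsWinner bs i) (j : Fin n) : bs j ≤ bs i := by
  rcases le_or_gt (bs j) 0 with hj | hj
  · exact hj.trans h.1.le
  · exact bid_le_of_bidKey_le ((isWinner_iff.1 h).2 j hj)

lemma exists_isWinner (h : ∃ j, 0 < bs j) : ∃ i, IsWinner bs i := by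
  obtain ⟨j, hj⟩ := h
  obtain ⟨i, hi, hmax⟩ := exists_max_image {j | 0 < bs j} (bidKey bs) ⟨j, by simpa using hj⟩
  exact ⟨i, isWinner_iff.2 ⟨by simpa using hi, fun k hk => hmax k (by simpa using hk)⟩⟩

def maxOtherBid (bs : Fin n → ℝ) (i : Fin n) : ℝ := (univ.erase i).fold max 0 bs

lemma maxOtherBid_nonneg : 0 ≤ maxOtherBid bs i := (le_fold_max _).2 (Or.inl le_rfl)

lemma le_maxOtherBid (hj : j ≠ i) : bs j ≤ maxOtherBid bs i :=
  (le_fold_max _).2 (Or.inr ⟨j, mem_erase.2 ⟨hj, mem_univ j⟩, le_rfl⟩)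

lemma maxOtherBid_le {c : ℝ} (hc : 0 ≤ c) (h : ∀ j ≠ i, bs j ≤ c) : maxOtherBid bs i ≤ c :=
  (fold_max_le _).2 ⟨hc, fun j hj => h j (ne_of_mem_erase hj)⟩

lemma maxOtherBid_update (bs : Fin n → ℝ) (i : Fin n) (y : ℝ) :
    maxOtherBid (update bs i y) i = maxOtherBid bs i :=
  fold_congr fun _ hj => update_of_ne (ne_of_mem_erase hj) _ _

lemma IsWinner.maxOtherBid_le (h : IsWinner bs i) : maxOtherBid bs i ≤ bs i :=
  PBM.maxOtherBid_le h.1.le fun j _ => h.bid_le j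

lemma le_maxOtherBid_of_not_isWinner (hi : 0 < bs i) (h : ¬ IsWinner bs i) :
    bs i ≤ maxOtherBid bs i := by
  obtain ⟨j, hj, hij⟩ : ∃ j, 0 < bs j ∧ bidKey bs i < bidKey bs j := by
    simpa [isWinner_iff, hi] using h
  exact (bid_le_of_bidKey_le hij.le).trans (le_maxOtherBid (ne_of_apply_ne _ hij.ne'))

lemma pay_eq_sum (bs : Fin n → ℝ) (i : Fin n) :
    pay bs i = ∑ j ∈ {j | 0 < bs j ∧ rank bs j = rank bs i + 1}, bs j := by
  simp only [pay]

lemma pay_nonneg (bs : Fin n → ℝ) (i : Fin n) : 0 ≤ pay bs i :=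
  pay_eq_sum bs i ▸ sum_nonneg fun _ hj => (mem_filter.1 hj).2.1.le

lemma IsWinner.pay_eq (h : IsWinner bs i) (hb0 : ∀ j, 0 ≤ bs j) :
    pay bs i = maxOtherBid bs i := by
  by_cases hrun : ∃ j ≠ i, 0 < bs j
  · obtain ⟨j, hj⟩ := hrun
    obtain ⟨j₁, hj₁, hmax⟩ := exists_max_image {j | j ≠ i ∧ 0 < bs j} (bidKey bs)
      ⟨j, by simpa using hj⟩
    simp only [mem_filter, mem_univ, true_and] at hj₁ hmax
    have hrank : rank bs j₁ = 1 := by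
      rw [rank_eq_card, card_eq_one]
      refine ⟨i, eq_singleton_iff_unique_mem.2 ⟨?_, fun k hk => ?_⟩⟩
      · simpa [h.1] using lt_of_le_of_ne ((isWinner_iff.1 h).2 j₁ hj₁.2)
          ((bidKey_injective bs).ne hj₁.1)
      · simp only [mem_filter, mem_univ, true_and] at hk
        by_contra hki
        exact (hmax k ⟨hki, hk.1⟩).not_gt hk.2
    have hset : ({j | 0 < bs j ∧ rank bs j = rank bs i + 1} : Finset (Fin n)) = {j₁} := by
      refine eq_singleton_iff_unique_mem.2 ⟨by simp [hj₁.2, hrank, h.2], fun k hk => ?_⟩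
      simp only [mem_filter, mem_univ, true_and, h.2] at hk
      exact rank_injOn bs hk.1 hj₁.2 (hk.2.trans hrank.symm)
    rw [pay_eq_sum, hset, sum_singleton]
    refine le_antisymm (le_maxOtherBid hj₁.1) (PBM.maxOtherBid_le (hb0 j₁) fun j hj => ?_)
    rcases (hb0 j).eq_or_lt with h0 | h0
    · exact h0 ▸ hb0 j₁
    · exact bid_le_of_bidKey_le (hmax j ⟨hj, h0⟩)
  · push Not at hrun
    have hpay : pay bs i = 0 := by
      rw [pay_eq_sum]
      refine sum_eq_zero fun j hj => ?_
      simp only [mem_filter, mem_univ, true_and, h.2] at hj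
      exact absurd (hrun j (by rintro rfl; simp [h.2] at hj)) hj.1.not_ge
    rw [hpay]
    exact (le_antisymm (PBM.maxOtherBid_le le_rfl hrun) maxOtherBid_nonneg).symm

end SingleKeyword

section SingleSlot

variable {n : ℕ} {w : ℕ → ℝ} {x bs : Fin n → ℝ} {i : Fin n}

lemma slotW_nonneg (hw0 : ∀ k, 0 ≤ w k) (bs : Fin n → ℝ) (i : Fin n) : 0 ≤ slotW w bs i := by
  unfold slotW
  split_ifs
  exacts [hw0 _, le_rfl]

lemma slotW_of_isWinner (h : IsWinner bs i) : slotW w bs i = w 0 := by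
  simp [slotW, h.1, h.2]

lemma slotW_of_not_isWinner (hw : ∀ k, 1 ≤ k → w k = 0) (h : ¬ IsWinner bs i) :
    slotW w bs i = 0 := by
  unfold slotW
  split_ifs with hi
  · exact hw _ (Nat.one_le_iff_ne_zero.2 fun h0 => h ⟨hi, h0⟩)
  · rfl

lemma gspUtil_le_slotW_mul (hw0 : ∀ k, 0 ≤ w k) (x bs : Fin n → ℝ) (i : Fin n) :
    gspUtil w x bs i ≤ slotW w bs i * x i :=
  mul_le_mul_of_nonneg_left (sub_le_self _ (pay_nonneg bs i)) (slotW_nonneg hw0 bs i)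

def truthfulGain (w : ℕ → ℝ) (x bs : Fin n → ℝ) (i : Fin n) : ℝ :=
  w 0 * max (x i - maxOtherBid bs i) 0

lemma truthfulGain_nonneg (hw0 : ∀ k, 0 ≤ w k) (x bs : Fin n → ℝ) (i : Fin n) :
    0 ≤ truthfulGain w x bs i :=
  mul_nonneg (hw0 0) (le_max_right _ _)

lemma truthfulGain_eq_zero (hx : x i = 0) : truthfulGain w x bs i = 0 := by
  simp [truthfulGain, hx, maxOtherBid_nonneg]

lemma gspUtil_eq_ite (hw : ∀ k, 1 ≤ k → w k = 0) (hb0 : ∀ j, 0 ≤ bs j) (hbx : bs i ≤ x i) :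
    gspUtil w x bs i = if IsWinner bs i then truthfulGain w x bs i else 0 := by
  unfold gspUtil truthfulGain
  split_ifs with h
  · rw [slotW_of_isWinner h, h.pay_eq hb0,
      max_eq_left (sub_nonneg.2 (h.maxOtherBid_le.trans hbx))]
  · rw [slotW_of_not_isWinner hw h, zero_mul]

lemma truthfulGain_le_gspUtil_update (hw : ∀ k, 1 ≤ k → w k = 0) (hb0 : ∀ j, 0 ≤ bs j)
    (hx : 0 ≤ x i) : truthfulGain w x bs i ≤ gspUtil w x (update bs i (x i)) i := by
  have hb0' : ∀ j, 0 ≤ update bs i (x i) j := by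
    intro j
    rcases eq_or_ne j i with rfl | hj
    · simpa using hx
    · simpa [hj] using hb0 j
  rw [gspUtil_eq_ite hw hb0' (by simp)]
  split_ifs with h
  · simp only [truthfulGain, maxOtherBid_update, le_refl]
  · have : x i ≤ maxOtherBid bs i := by
      rcases hx.eq_or_lt with h0 | h0
      · exact h0 ▸ maxOtherBid_nonneg
      · simpa [maxOtherBid_update] using le_maxOtherBid_of_not_isWinner (by simpa using h0) h
    simp [truthfulGain, this]

lemma mul_maxOtherBid_le_sum_slotW_mul (hw0 : ∀ k, 0 ≤ w k) (hx0 : ∀ j, 0 ≤ x j)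
    (hbx : ∀ j, bs j ≤ x j) (i : Fin n) :
    w 0 * maxOtherBid bs i ≤ ∑ k, slotW w bs k * x k := by
  have hterm : ∀ k ∈ univ, 0 ≤ slotW w bs k * x k :=
    fun k _ => mul_nonneg (slotW_nonneg hw0 bs k) (hx0 k)
  by_cases hpos : ∃ j, 0 < bs j
  · obtain ⟨j, hj⟩ := exists_isWinner hpos
    calc w 0 * maxOtherBid bs i ≤ slotW w bs j * x j := by
          rw [slotW_of_isWinner hj]
          exact mul_le_mul_of_nonneg_left
            ((PBM.maxOtherBid_le hj.1.le fun k _ => hj.bid_le k).trans (hbx j)) (hw0 0)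
      _ ≤ ∑ k, slotW w bs k * x k := single_le_sum hterm (mem_univ j)
  · push Not at hpos
    calc w 0 * maxOtherBid bs i ≤ 0 :=
          mul_nonpos_of_nonneg_of_nonpos (hw0 0) (PBM.maxOtherBid_le le_rfl fun j _ => hpos j)
      _ ≤ ∑ k, slotW w bs k * x k := sum_nonneg hterm

lemma mul_le_sum_slotW_mul_add (hw0 : ∀ k, 0 ≤ w k) (hx0 : ∀ j, 0 ≤ x j)
    (hbx : ∀ j, bs j ≤ x j) (i : Fin n) :
    w 0 * x i ≤ ∑ k, slotW w bs k * x k + if IsWinner bs i then 0 else truthfulGain w x bs i := by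
  split_ifs with h
  · rw [add_zero, ← slotW_of_isWinner (w := w) h]
    exact single_le_sum (fun k _ => mul_nonneg (slotW_nonneg hw0 bs k) (hx0 k)) (mem_univ i)
  · have := mul_maxOtherBid_le_sum_slotW_mul hw0 hx0 hbx i
    have : w 0 * (x i - maxOtherBid bs i) ≤ truthfulGain w x bs i :=
      mul_le_mul_of_nonneg_left (le_max_left _ _) (hw0 0)
    linarith

lemma sum_w_rankAll_mul_le (hw : ∀ k, 1 ≤ k → w k = 0) (hw0 : ∀ k, 0 ≤ w k)
    (hx0 : ∀ j, 0 ≤ x j) (hbx : ∀ j, bs j ≤ x j) :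
    ∑ i, w (rankAll x i) * x i ≤ ∑ k, slotW w bs k * x k +
      ∑ i, if rankAll x i = 0 ∧ ¬ IsWinner bs i then truthfulGain w x bs i else 0 := by
  rcases isEmpty_or_nonempty (Fin n) with hn | hn
  · simp
  obtain ⟨i₀, -, hmax⟩ := exists_max_image univ (bidKey x) univ_nonempty
  have htop : rankAll x i₀ = 0 := by
    simpa [rankAll_eq_card, filter_eq_empty_iff] using fun j => hmax j (mem_univ j)
  have hlow : ∀ i ≠ i₀, w (rankAll x i) = 0 := fun i hi => by
    refine hw _ (card_pos.2 ⟨i₀, ?_⟩ |>.trans_eq (rankAll_eq_card x i).symm)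
    simpa using lt_of_le_of_ne (hmax i (mem_univ i)) ((bidKey_injective x).ne hi)
  rw [sum_eq_single i₀ (fun i _ hi => by rw [hlow i hi, zero_mul]) (by simp), htop]
  refine (mul_le_sum_slotW_mul_add hw0 hx0 hbx i₀).trans (add_le_add_right ?_ _)
  have hterm : ∀ i ∈ univ, 0 ≤
      if rankAll x i = 0 ∧ ¬ IsWinner bs i then truthfulGain w x bs i else 0 :=
    fun i _ => by split_ifs <;> simp [truthfulGain_nonneg hw0]
  convert single_le_sum hterm (mem_univ i₀) using 1
  simp [htop]

end SingleSlot

section Keywords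

variable {Q S : Type*} [Fintype Q] {P : Q → ℝ} {pi : Q → S → ℝ}

lemma mass_nonneg (hP0 : ∀ q, 0 ≤ P q) (hpi0 : ∀ q s, 0 ≤ pi q s) (s : S) :
    0 ≤ mass P pi s :=
  sum_nonneg fun q _ => mul_nonneg (hpi0 q s) (hP0 q)

lemma kwVal_nonneg (hP0 : ∀ q, 0 ≤ P q) (hpi0 : ∀ q s, 0 ≤ pi q s) {vq : Q → ℝ}
    (hv : ∀ q, 0 ≤ vq q) (s : S) : 0 ≤ kwVal P pi vq s :=
  div_nonneg (sum_nonneg fun q _ => mul_nonneg (mul_nonneg (hpi0 q s) (hv q)) (hP0 q))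
    (mass_nonneg hP0 hpi0 s)

lemma kwVal_eq_zero (hpi0 : ∀ q s, 0 ≤ pi q s) {vq : Q → ℝ} (hv : ∀ q, 0 ≤ vq q) {s : S}
    (h : ¬ ∃ q, 0 < pi q s ∧ 0 < vq q) : kwVal P pi vq s = 0 := by
  push Not at h
  rw [kwVal, sum_eq_zero fun q _ => ?_, zero_div]
  rcases (hpi0 q s).eq_or_lt with h0 | h0
  · simp [← h0]
  · simp [le_antisymm (h q h0) (hv q)]

lemma mass_mul_kwVal (hP0 : ∀ q, 0 ≤ P q) (hpi0 : ∀ q s, 0 ≤ pi q s) (vq : Q → ℝ) (s : S) :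
    mass P pi s * kwVal P pi vq s = ∑ q, pi q s * vq q * P q := by
  rcases (mass_nonneg hP0 hpi0 s).eq_or_lt with h | h
  · have hq := (sum_eq_zero_iff_of_nonneg fun q _ => mul_nonneg (hpi0 q s) (hP0 q)).1 h.symm
    rw [← h, zero_mul]
    exact (sum_eq_zero fun q hq' => by linear_combination vq q * hq q hq').symm
  · exact mul_div_cancel₀ _ h.ne'

variable [Fintype S]

lemma sum_mul_sum_mul_eq_sum_mass_mul (c : S → ℝ) :
    ∑ q, P q * ∑ s, pi q s * c s = ∑ s, mass P pi s * c s := by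
  simp only [mass, mul_sum, sum_mul]
  rw [sum_comm]
  exact sum_congr rfl fun _ _ => sum_congr rfl fun _ _ => by ring

lemma sum_mul_sum_mul_eq_sum_mass_mul_kwVal (hP0 : ∀ q, 0 ≤ P q) (hpi0 : ∀ q s, 0 ≤ pi q s)
    (c : S → ℝ) (vq : Q → ℝ) :
    ∑ q, P q * ∑ s, pi q s * (c s * vq q) = ∑ s, mass P pi s * (c s * kwVal P pi vq s) := by
  have h : ∀ s, mass P pi s * (c s * kwVal P pi vq s) = c s * ∑ q, pi q s * vq q * P q :=
    fun s => by rw [mul_left_comm, mass_mul_kwVal hP0 hpi0]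
  simp only [h, mul_sum]
  rw [sum_comm]
  exact sum_congr rfl fun _ _ => sum_congr rfl fun _ _ => by ring

variable {n : ℕ} {w : ℕ → ℝ} {v : Fin n → Q → ℝ} {b : Fin n → S → ℝ}

lemma util_eq (hP0 : ∀ q, 0 ≤ P q) (hpi0 : ∀ q s, 0 ≤ pi q s) (i : Fin n) :
    util P pi w v b i = ∑ s, mass P pi s *
      gspUtil w (fun j => kwVal P pi (v j) s) (fun j => b j s) i := by
  simp only [util, gspUtil, mul_sub, sum_sub_distrib,
    sum_mul_sum_mul_eq_sum_mass_mul_kwVal hP0 hpi0, sum_mul_sum_mul_eq_sum_mass_mul]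

lemma SW_eq (hP0 : ∀ q, 0 ≤ P q) (hpi0 : ∀ q s, 0 ≤ pi q s) :
    SW P pi w v b = ∑ s, mass P pi s *
      ∑ i, slotW w (fun j => b j s) i * kwVal P pi (v i) s := by
  calc SW P pi w v b
      = ∑ i, ∑ q, P q * ∑ s, pi q s * (slotW w (fun j => b j s) i * v i q) := by
        simp only [SW, mul_sum]
        exact (sum_congr rfl fun _ _ => sum_comm).trans sum_comm
    _ = _ := by
        simp_rw [sum_mul_sum_mul_eq_sum_mass_mul_kwVal hP0 hpi0, mul_sum]
        exact sum_comm

lemma SWtruth_eq : SWtruth P pi w v = ∑ s, mass P pi s *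
    ∑ i, w (rankAll (fun j => kwVal P pi (v j) s) i) * kwVal P pi (v i) s :=
  sum_mul_sum_mul_eq_sum_mass_mul _

end Keywords

section Equilibrium

variable {Q S : Type*} [Fintype Q] {P : Q → ℝ} {pi : Q → S → ℝ} {n : ℕ}
  {w : ℕ → ℝ} {v : Fin n → Q → ℝ} {b : Fin n → S → ℝ} {i : Fin n}

def keywordGain (P : Q → ℝ) (pi : Q → S → ℝ) (w : ℕ → ℝ) (v : Fin n → Q → ℝ)
    (b : Fin n → S → ℝ) (i : Fin n) (s : S) : ℝ :=
  mass P pi s * truthfulGain w (fun j => kwVal P pi (v j) s) (fun j => b j s) i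

lemma keywordGain_nonneg (hP0 : ∀ q, 0 ≤ P q) (hpi0 : ∀ q s, 0 ≤ pi q s)
    (hw0 : ∀ k, 0 ≤ w k) (i : Fin n) (s : S) : 0 ≤ keywordGain P pi w v b i s :=
  mul_nonneg (mass_nonneg hP0 hpi0 s) (truthfulGain_nonneg hw0 _ _ i)

lemma keywordGain_eq_zero (hpi0 : ∀ q s, 0 ≤ pi q s) (hv0 : ∀ q, 0 ≤ v i q) {s : S}
    (h : ¬ ∃ q, 0 < pi q s ∧ 0 < v i q) : keywordGain P pi w v b i s = 0 := by
  rw [keywordGain, truthfulGain_eq_zero (kwVal_eq_zero hpi0 hv0 h), mul_zero]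

variable [Fintype S]

def missedGain (P : Q → ℝ) (pi : Q → S → ℝ) (w : ℕ → ℝ) (v : Fin n → Q → ℝ)
    (b : Fin n → S → ℝ) (i : Fin n) : ℝ :=
  ∑ s, if rankAll (fun j => kwVal P pi (v j) s) i = 0 ∧ ¬ IsWinner (fun j => b j s) i then
    keywordGain P pi w v b i s else 0

lemma sum_keywordGain_le_util {κ : ℕ} (hP0 : ∀ q, 0 ≤ P q) (hpi0 : ∀ q s, 0 ≤ pi q s)
    (hw : ∀ k, 1 ≤ k → w k = 0) (hv0 : ∀ q, 0 ≤ v i q) (hb0 : ∀ j s, 0 ≤ b j s)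
    (hNE : ∀ b' : S → ℝ, ValidBid κ b' → util P pi w v (update b i b') i ≤ util P pi w v b i)
    {D : Finset S} (hD : #D ≤ κ) : ∑ s ∈ D, keywordGain P pi w v b i s ≤ util P pi w v b i := by
  classical
  set b' : S → ℝ := fun s => if s ∈ D then kwVal P pi (v i) s else 0 with hb'
  have hb'0 : ∀ s, 0 ≤ b' s := fun s => by
    simp only [hb']
    split_ifs
    exacts [kwVal_nonneg hP0 hpi0 hv0 s, le_rfl]
  have hvalid : ValidBid κ b' := by
    refine ⟨hb'0, (card_le_card fun s hs => ?_).trans hD⟩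
    by_contra hsD
    simp [hb', hsD] at hs
  have hcol : ∀ s, (fun j => update b i b' j s) = update (fun j => b j s) i (b' s) :=
    fun s => funext fun j => apply_update (fun _ f => f s) b i b' j
  refine le_trans ?_ (hNE b' hvalid)
  rw [util_eq hP0 hpi0, ← sum_subset (subset_univ D) fun s _ hs => ?_]
  · refine sum_le_sum fun s hs => mul_le_mul_of_nonneg_left ?_ (mass_nonneg hP0 hpi0 s)
    rw [hcol s]
    simpa [hb', hs] using truthfulGain_le_gspUtil_update hw (fun j => hb0 j s)
      (x := fun j => kwVal P pi (v j) s) (kwVal_nonneg hP0 hpi0 hv0 s)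
  · simp [gspUtil, slotW, hb', hs]

lemma mul_sum_keywordGain_le_util {κ : ℕ} {β : ℝ} (hP0 : ∀ q, 0 ≤ P q)
    (hpi0 : ∀ q s, 0 ≤ pi q s) (hw : ∀ k, 1 ≤ k → w k = 0) (hw0 : ∀ k, 0 ≤ w k)
    (hv0 : ∀ q, 0 ≤ v i q) (hb0 : ∀ j s, 0 ≤ b j s) (hβ1 : β ≤ 1)
    (hKL : β * #{s | ∃ q, 0 < pi q s ∧ 0 < v i q} ≤ κ)
    (hNE : ∀ b' : S → ℝ, ValidBid κ b' → util P pi w v (update b i b') i ≤ util P pi w v b i) :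
    β * ∑ s, keywordGain P pi w v b i s ≤ util P pi w v b i := by
  rw [← sum_subset (subset_univ {s | ∃ q, 0 < pi q s ∧ 0 < v i q})
    fun s _ hs => keywordGain_eq_zero hpi0 hv0 (by simpa using hs)]
  exact mul_sum_le_of_forall_card_le (fun s _ => keywordGain_nonneg hP0 hpi0 hw0 i s) hβ1 hKL
    fun D _ hD => sum_keywordGain_le_util hP0 hpi0 hw hv0 hb0 hNE hD

lemma util_eq_sum_ite (hP0 : ∀ q, 0 ≤ P q) (hpi0 : ∀ q s, 0 ≤ pi q s)
    (hw : ∀ k, 1 ≤ k → w k = 0) (hb0 : ∀ j s, 0 ≤ b j s) (hcons : Conservative P pi v b)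
    (i : Fin n) : util P pi w v b i =
      ∑ s, if IsWinner (fun j => b j s) i then keywordGain P pi w v b i s else 0 := by
  rw [util_eq hP0 hpi0]
  refine sum_congr rfl fun s _ => ?_
  rw [gspUtil_eq_ite hw (fun j => hb0 j s) (hcons i s), mul_ite, mul_zero, keywordGain]

lemma util_add_missedGain_le (hP0 : ∀ q, 0 ≤ P q) (hpi0 : ∀ q s, 0 ≤ pi q s)
    (hw : ∀ k, 1 ≤ k → w k = 0) (hw0 : ∀ k, 0 ≤ w k) (hb0 : ∀ j s, 0 ≤ b j s)
    (hcons : Conservative P pi v b) (i : Fin n) :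
    util P pi w v b i + missedGain P pi w v b i ≤ ∑ s, keywordGain P pi w v b i s := by
  rw [util_eq_sum_ite hP0 hpi0 hw hb0 hcons, missedGain, ← sum_add_distrib]
  refine sum_le_sum fun s _ => ?_
  have := keywordGain_nonneg (v := v) (b := b) hP0 hpi0 hw0 i s
  split_ifs with hwin hmiss hmiss
  · exact absurd hwin hmiss.2
  all_goals linarith

lemma sum_util_le_SW (hP0 : ∀ q, 0 ≤ P q) (hpi0 : ∀ q s, 0 ≤ pi q s) (hw0 : ∀ k, 0 ≤ w k) :
    ∑ i, util P pi w v b i ≤ SW P pi w v b := by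
  simp_rw [util_eq hP0 hpi0, SW_eq hP0 hpi0]
  rw [sum_comm]
  refine sum_le_sum fun s _ => ?_
  rw [← mul_sum]
  exact mul_le_mul_of_nonneg_left (sum_le_sum fun i _ => gspUtil_le_slotW_mul hw0 _ _ i)
    (mass_nonneg hP0 hpi0 s)

lemma SWtruth_le_SW_add_missedGain (hP0 : ∀ q, 0 ≤ P q) (hpi0 : ∀ q s, 0 ≤ pi q s)
    (hw : ∀ k, 1 ≤ k → w k = 0) (hw0 : ∀ k, 0 ≤ w k) (hv0 : ∀ i q, 0 ≤ v i q)
    (hcons : Conservative P pi v b) :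
    SWtruth P pi w v ≤ SW P pi w v b + ∑ i, missedGain P pi w v b i := by
  simp only [SWtruth_eq, SW_eq hP0 hpi0, missedGain]
  rw [sum_comm, ← sum_add_distrib]
  refine sum_le_sum fun s _ => ?_
  calc _ ≤ mass P pi s * (∑ k, slotW w (fun j => b j s) k * kwVal P pi (v k) s +
        ∑ i, if rankAll (fun j => kwVal P pi (v j) s) i = 0 ∧ ¬ IsWinner (fun j => b j s) i
          then truthfulGain w (fun j => kwVal P pi (v j) s) (fun j => b j s) i else 0) :=
        mul_le_mul_of_nonneg_left (sum_w_rankAll_mul_le hw hw0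
          (fun j => kwVal_nonneg hP0 hpi0 (hv0 j) s) fun j => hcons j s) (mass_nonneg hP0 hpi0 s)
    _ = _ := by simp only [keywordGain, mul_add, mul_sum, mul_ite, mul_zero]

end Equilibrium

end PBM

open PBM in
theorem stmt10_general
    {Q S : Type*} [Fintype Q] [Fintype S] {n : ℕ}
    (P : Q → ℝ) (pi : Q → S → ℝ) (w : ℕ → ℝ) (κ : ℕ)
    (hP0 : ∀ q, 0 ≤ P q)
    (hpi0 : ∀ q s, 0 ≤ pi q s)
    (hw0 : ∀ k, 0 ≤ w k)
    (hwk : ∀ k, 1 ≤ k → w k = 0)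
    (β : ℝ) (hβ : 0 < β) (hβ1 : β ≤ 1)
    (v : Fin n → Q → ℝ) (hv0 : ∀ i q, 0 ≤ v i q)
    (hKL : KLExpressive pi v κ β)
    (b : Fin n → S → ℝ)
    (hvalid : ∀ i, ValidBid κ (b i))
    (hcons : Conservative P pi v b)
    (hNE : ∀ (i : Fin n) (b' : S → ℝ), ValidBid κ b' →
      util P pi w v (Function.update b i b') i ≤ util P pi w v b i) :
    SWtruth P pi w v ≤ (1 / β) * SW P pi w v b := by
  have hb0 : ∀ j s, 0 ≤ b j s := fun j s => (hvalid j).1 s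
  have hutil : ∀ i, β * (util P pi w v b i + missedGain P pi w v b i) ≤ util P pi w v b i :=
    fun i => (mul_le_mul_of_nonneg_left (util_add_missedGain_le hP0 hpi0 hwk hw0 hb0 hcons i)
      hβ.le).trans (mul_sum_keywordGain_le_util hP0 hpi0 hwk hw0 (hv0 i) hb0 hβ1
        (by simpa using hKL i) (hNE i))
  have hsum : β * (∑ i, util P pi w v b i + ∑ i, missedGain P pi w v b i) ≤
      ∑ i, util P pi w v b i := by
    rw [← sum_add_distrib, mul_sum]
    exact sum_le_sum fun i _ => hutil i
  have hU := sum_util_le_SW (v := v) (b := b) hP0 hpi0 hw0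
  have hT := SWtruth_le_SW_add_missedGain hP0 hpi0 hwk hw0 hv0 hcons
  rw [one_div_mul_eq_div, le_div_iff₀ hβ]
  linarith [mul_le_mul_of_nonneg_left hT hβ.le, mul_nonneg (sub_nonneg.2 hβ1) (sub_nonneg.2 hU)]

open PBM in
/-- full-information single slot: if the auction system is
`β`-KL-expressive then for every conservative pure Nash equilibrium `b`,
`SW(𝔳) ≤ (1/β)·SW(b)` where `𝔳` is the truthful keyword-bid profile. -/
theorem stmt10
    {Q S : Type*} [Fintype Q] [Fintype S] {n : ℕ}
    (P : Q → ℝ) (pi : Q → S → ℝ) (w : ℕ → ℝ) (κ : ℕ)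
    (hP0 : ∀ q, 0 ≤ P q) (hP1 : ∑ q, P q = 1)
    (hpi0 : ∀ q s, 0 ≤ pi q s) (hpi1 : ∀ q, ∑ s, pi q s = 1)
    (hS : ∀ s : S, ∃ q, 0 < pi q s)
    (hw0 : ∀ k, 0 ≤ w k) (hκ : 0 < κ)
    (hw1 : 0 < w 0) (hwk : ∀ k, 1 ≤ k → w k = 0)
    (β : ℝ) (hβ : 0 < β) (hβ1 : β ≤ 1)
    (v : Fin n → Q → ℝ) (hv0 : ∀ i q, 0 ≤ v i q)
    (hKL : KLExpressive pi v κ β)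
    (b : Fin n → S → ℝ)
    (hvalid : ∀ i, ValidBid κ (b i))
    (hcons : Conservative P pi v b)
    (hNE : ∀ (i : Fin n) (b' : S → ℝ), ValidBid κ b' →
      util P pi w v (Function.update b i b') i ≤ util P pi w v b i) :
    SWtruth P pi w v ≤ (1 / β) * SW P pi w v b :=
  stmt10_general P pi w κ hP0 hpi0 hw0 hwk β hβ hβ1 v hv0 hKL b hvalid hcons hNE
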